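/- arXiv:2404.02539 — 2 statements merged into one kernel-verified Lean document; each statement's English description precedes it below -/
import Mathlib

section
/- Stability with respect to the Allee threshold: if y₁ and y₂ solve y' = r y(1-y)(y/θᵢ(t) - 1) with the same initial value y₀ ∈ (0,1) and continuous thresholds θ₁, θ₂ taking values in [θ₋, θ₊] with θ₋ > 0, θ₊ > 1, then |y₁(t) - y₂(t)| ≤ (4 r t / (27 θ₋²)) · exp(r t · max((θ₊ - 1)²/(3θ₋) + 1/3, 1)) · sup_{s∈[0,t]} |θ₁(s) - θ₂(s)|. -/
open Set

/-!
Pass to the coordinate `Φ(y) = (4/27) (log y - log (1 - y) - 1/y)`, whose derivative is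
`(4/27) / (y² (1 - y))`. Along a solution, `d/dt Φ(y) = (4r/27) (1/θ - 1/y)`, so the difference
`v = Φ(y₁) - Φ(y₂)` satisfies `|v'| ≤ (4r/27) |1/θ₁ - 1/θ₂| + (4r/27) |1/y₁ - 1/y₂|`. Since
`y² (1 - y) ≤ 4/27` on `[0, 1]`, `Φ' ≥ 1` and `Φ' ≥ (4/27) / y²`, so both `|y₁ - y₂|` and
`(4/27) |1/y₁ - 1/y₂|` are bounded by `|v|`. Grönwall's inequality then bounds `|v|`, hence
`|y₁ - y₂|`.
-/

noncomputable def alleeTransform (y : ℝ) : ℝ :=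
  4 / 27 * (Real.log y - Real.log (1 - y) - y⁻¹)

lemma hasDerivAt_alleeTransform {y : ℝ} (hy : y ∈ Ioo (0 : ℝ) 1) :
    HasDerivAt alleeTransform (4 / 27 / (y ^ 2 * (1 - y))) y := by
  have h₀ : y ≠ 0 := hy.1.ne'
  have h₁ : 1 - y ≠ 0 := (sub_pos.2 hy.2).ne'
  exact ((((Real.hasDerivAt_log h₀).sub (((hasDerivAt_id' y).const_sub 1).log h₁)).sub
    (hasDerivAt_inv h₀)).const_mul (4 / 27 : ℝ)).congr_deriv (by field_simp; ring)

lemma hasDerivAt_alleeTransform_comp {y : ℝ → ℝ} {r θ t : ℝ} (hθ : θ ≠ 0)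
    (hyt : y t ∈ Ioo (0 : ℝ) 1) (hy : HasDerivAt y (r * y t * (1 - y t) * (y t / θ - 1)) t) :
    HasDerivAt (fun s => alleeTransform (y s)) (4 * r / 27 * (θ⁻¹ - (y t)⁻¹)) t := by
  have h₀ : y t ≠ 0 := hyt.1.ne'
  have h₁ : 1 - y t ≠ 0 := (sub_pos.2 hyt.2).ne'
  exact ((hasDerivAt_alleeTransform hyt).comp t hy).congr_deriv (by field_simp)

lemma sq_mul_one_sub_le {y : ℝ} (hy : 0 ≤ y) : y ^ 2 * (1 - y) ≤ 4 / 27 := by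
  nlinarith [mul_nonneg (sq_nonneg (y - 2 / 3)) hy]

lemma abs_sub_le_abs_sub_of_abs_deriv_le {D : Set ℝ} (hD : Convex ℝ D) {f g f' g' : ℝ → ℝ}
    (hf : ∀ x ∈ D, HasDerivAt f (f' x) x) (hg : ∀ x ∈ D, HasDerivAt g (g' x) x)
    (hle : ∀ x ∈ D, |g' x| ≤ f' x) {a b : ℝ} (ha : a ∈ D) (hb : b ∈ D) :
    |g a - g b| ≤ |f a - f b| := by
  have monotone {h h' : ℝ → ℝ} (hh : ∀ x ∈ D, HasDerivAt h (h' x) x)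
      (hh' : ∀ x ∈ D, 0 ≤ h' x) : MonotoneOn h D :=
    monotoneOn_of_hasDerivWithinAt_nonneg hD
      (fun x hx => (hh x hx).continuousAt.continuousWithinAt)
      (fun x hx => (hh x (interior_subset hx)).hasDerivWithinAt)
      (fun x hx => hh' x (interior_subset hx))
  have hsub := monotone (fun x hx => (hf x hx).sub (hg x hx))
    (fun x hx => by linarith [le_abs_self (g' x), hle x hx])
  have hadd := monotone (fun x hx => (hf x hx).add (hg x hx))
    (fun x hx => by linarith [neg_abs_le (g' x), hle x hx])
  wlog hab : a ≤ b generalizing a b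
  · rw [abs_sub_comm, abs_sub_comm (f a)]
    exact this hb ha (le_of_not_ge hab)
  have h₁ := hsub ha hb hab
  have h₂ := hadd ha hb hab
  simp only [Pi.sub_apply, Pi.add_apply] at h₁ h₂
  rw [abs_sub_comm (f a), abs_of_nonneg (a := f b - f a) (by linarith)]
  exact abs_le.2 ⟨by linarith, by linarith⟩

lemma abs_sub_le_abs_alleeTransform_sub {a b : ℝ} (ha : a ∈ Ioo (0 : ℝ) 1)
    (hb : b ∈ Ioo (0 : ℝ) 1) : |a - b| ≤ |alleeTransform a - alleeTransform b| := by
  refine abs_sub_le_abs_sub_of_abs_deriv_le (convex_Ioo 0 1)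
    (fun x hx => hasDerivAt_alleeTransform hx) (fun x _ => hasDerivAt_id x) (fun x hx => ?_) ha hb
  have hx₀ : 0 < x ^ 2 * (1 - x) := mul_pos (pow_pos hx.1 2) (sub_pos.2 hx.2)
  rw [abs_one, le_div_iff₀ hx₀, one_mul]
  exact sq_mul_one_sub_le hx.1.le

lemma abs_inv_sub_inv_le_abs_alleeTransform_sub {a b : ℝ} (ha : a ∈ Ioo (0 : ℝ) 1)
    (hb : b ∈ Ioo (0 : ℝ) 1) : 4 / 27 * |a⁻¹ - b⁻¹| ≤ |alleeTransform a - alleeTransform b| := by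
  have key := abs_sub_le_abs_sub_of_abs_deriv_le (convex_Ioo 0 1)
    (fun x hx => hasDerivAt_alleeTransform hx)
    (fun x hx => (hasDerivAt_inv hx.1.ne').const_mul (4 / 27 : ℝ)) (fun x hx => ?_) ha hb
  · rwa [← mul_sub, abs_mul, abs_of_pos (by norm_num : (0 : ℝ) < 4 / 27)] at key
  have hx₂ : 0 < x ^ 2 := pow_pos hx.1 2
  rw [abs_mul, abs_neg, abs_of_pos (by norm_num : (0 : ℝ) < 4 / 27), abs_of_pos (inv_pos.2 hx₂),
    ← div_eq_mul_inv]
  exact div_le_div_of_nonneg_left (by norm_num) (mul_pos hx₂ (sub_pos.2 hx.2))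
    (mul_le_of_le_one_right hx₂.le (by linarith [hx.1]))

lemma abs_inv_sub_inv_le {m a b : ℝ} (hm : 0 < m) (ha : m ≤ a) (hb : m ≤ b) :
    |a⁻¹ - b⁻¹| ≤ |a - b| / m ^ 2 := by
  have ha₀ : 0 < a := hm.trans_le ha
  have hb₀ : 0 < b := hm.trans_le hb
  rw [inv_sub_inv ha₀.ne' hb₀.ne', abs_div, abs_sub_comm, abs_of_pos (mul_pos ha₀ hb₀), sq]
  gcongr

lemma gronwallBound_zero_le {K ε x : ℝ} (hK : 0 ≤ K) (hε : 0 ≤ ε) :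
    gronwallBound 0 K ε x ≤ ε * x * Real.exp (K * x) := by
  rcases hK.eq_or_lt with rfl | hK
  · simp [gronwallBound_K0]
  have hexp : Real.exp (K * x) - 1 ≤ K * x * Real.exp (K * x) := by
    have h := mul_le_mul_of_nonneg_right (Real.one_sub_le_exp_neg (K * x))
      (Real.exp_pos (K * x)).le
    rw [← Real.exp_add, neg_add_cancel, Real.exp_zero] at h
    linarith
  calc gronwallBound 0 K ε x = ε / K * (Real.exp (K * x) - 1) := by
        simp [gronwallBound_of_K_ne_0 hK.ne']
    _ ≤ ε / K * (K * x * Real.exp (K * x)) := by gcongr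
    _ = ε * x * Real.exp (K * x) := by field_simp

lemma abs_alleeTransform_sub_le_gronwallBound {r m S a b : ℝ} {θ₁ θ₂ y₁ y₂ : ℝ → ℝ}
    (hr : 0 ≤ r) (hm : 0 < m) (hθ₁ : ∀ t ∈ Icc a b, m ≤ θ₁ t) (hθ₂ : ∀ t ∈ Icc a b, m ≤ θ₂ t)
    (hS : ∀ t ∈ Icc a b, |θ₁ t - θ₂ t| ≤ S)
    (hy₁ : ∀ t ∈ Icc a b, HasDerivAt y₁ (r * y₁ t * (1 - y₁ t) * (y₁ t / θ₁ t - 1)) t)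
    (hy₂ : ∀ t ∈ Icc a b, HasDerivAt y₂ (r * y₂ t * (1 - y₂ t) * (y₂ t / θ₂ t - 1)) t)
    (hy₁range : ∀ t ∈ Icc a b, y₁ t ∈ Ioo (0 : ℝ) 1)
    (hy₂range : ∀ t ∈ Icc a b, y₂ t ∈ Ioo (0 : ℝ) 1) (hy₀ : y₁ a = y₂ a) :
    ∀ t ∈ Icc a b, |alleeTransform (y₁ t) - alleeTransform (y₂ t)| ≤
      gronwallBound 0 r (4 * r / 27 * (S / m ^ 2)) (t - a) := by
  have hv (t : ℝ) (ht : t ∈ Icc a b) :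
      HasDerivAt (fun s => alleeTransform (y₁ s) - alleeTransform (y₂ s))
        (4 * r / 27 * ((θ₁ t)⁻¹ - (y₁ t)⁻¹) - 4 * r / 27 * ((θ₂ t)⁻¹ - (y₂ t)⁻¹)) t :=
    (hasDerivAt_alleeTransform_comp (hm.trans_le (hθ₁ t ht)).ne' (hy₁range t ht) (hy₁ t ht)).sub
      (hasDerivAt_alleeTransform_comp (hm.trans_le (hθ₂ t ht)).ne' (hy₂range t ht) (hy₂ t ht))
  refine norm_le_gronwallBound_of_norm_deriv_right_le
    (fun t ht => (hv t ht).continuousAt.continuousWithinAt)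
    (fun t ht => (hv t (Ico_subset_Icc_self ht)).hasDerivWithinAt) (by simp [hy₀])
    (fun t ht => ?_)
  replace ht := Ico_subset_Icc_self ht
  have hθ := abs_inv_sub_inv_le hm (hθ₁ t ht) (hθ₂ t ht)
  have hy := abs_inv_sub_inv_le_abs_alleeTransform_sub (hy₁range t ht) (hy₂range t ht)
  have hc : (0 : ℝ) ≤ 4 * r / 27 := by positivity
  rw [Real.norm_eq_abs, Real.norm_eq_abs]
  calc _ = |4 * r / 27 * ((θ₁ t)⁻¹ - (θ₂ t)⁻¹) - r * (4 / 27 * ((y₁ t)⁻¹ - (y₂ t)⁻¹))| := by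
          congr 1; ring
    _ ≤ 4 * r / 27 * |(θ₁ t)⁻¹ - (θ₂ t)⁻¹| + r * (4 / 27 * |(y₁ t)⁻¹ - (y₂ t)⁻¹|) := by
          refine (abs_sub _ _).trans_eq ?_
          rw [abs_mul, abs_mul, abs_mul, abs_of_nonneg hc, abs_of_nonneg hr,
            abs_of_pos (by norm_num : (0 : ℝ) < 4 / 27)]
    _ ≤ r * |alleeTransform (y₁ t) - alleeTransform (y₂ t)| + 4 * r / 27 * (S / m ^ 2) := by
          rw [add_comm]
          gcongr
          exact hθ.trans (by gcongr; exact hS t ht)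

theorem stmt_1_general (T r θm θp y₀ : ℝ) (hr : 0 < r)
    (hθm : 0 < θm)
    (θ₁ θ₂ : ℝ → ℝ) (hθ₁c : ContinuousOn θ₁ (Icc 0 T)) (hθ₂c : ContinuousOn θ₂ (Icc 0 T))
    (hθ₁range : ∀ t ∈ Icc (0:ℝ) T, θ₁ t ∈ Icc θm θp)
    (hθ₂range : ∀ t ∈ Icc (0:ℝ) T, θ₂ t ∈ Icc θm θp)
    (y₁ y₂ : ℝ → ℝ)
    (hy₁ : ∀ t ∈ Icc (0:ℝ) T,
      HasDerivAt y₁ (r * y₁ t * (1 - y₁ t) * (y₁ t / θ₁ t - 1)) t)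
    (hy₂ : ∀ t ∈ Icc (0:ℝ) T,
      HasDerivAt y₂ (r * y₂ t * (1 - y₂ t) * (y₂ t / θ₂ t - 1)) t)
    (hy₁0 : y₁ 0 = y₀) (hy₂0 : y₂ 0 = y₀)
    (hy₁range : ∀ t ∈ Icc (0:ℝ) T, y₁ t ∈ Ioo (0:ℝ) 1)
    (hy₂range : ∀ t ∈ Icc (0:ℝ) T, y₂ t ∈ Ioo (0:ℝ) 1) :
    ∀ t ∈ Icc (0:ℝ) T,
      |y₁ t - y₂ t| ≤
        (4 * r * t / (27 * θm ^ 2)) *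
          Real.exp (r * t * max ((θp - 1) ^ 2 / (3 * θm) + 1 / 3) 1) *
          sSup ((fun s => |θ₁ s - θ₂ s|) '' Icc (0:ℝ) t) := by
  rintro t ⟨ht₀, htT⟩
  have hsub : Icc 0 t ⊆ Icc 0 T := Icc_subset_Icc_right htT
  set S := sSup ((fun s => |θ₁ s - θ₂ s|) '' Icc (0:ℝ) t)
  have hS (s : ℝ) (hs : s ∈ Icc 0 t) : |θ₁ s - θ₂ s| ≤ S :=
    le_csSup (isCompact_Icc.image_of_continuousOn
      ((hθ₁c.mono hsub).sub (hθ₂c.mono hsub)).abs).bddAbove (mem_image_of_mem _ hs)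
  have hS₀ : 0 ≤ S := (abs_nonneg _).trans (hS 0 ⟨le_rfl, ht₀⟩)
  have hgron := abs_alleeTransform_sub_le_gronwallBound hr.le hθm
    (fun s hs => (hθ₁range s (hsub hs)).1) (fun s hs => (hθ₂range s (hsub hs)).1) hS
    (fun s hs => hy₁ s (hsub hs)) (fun s hs => hy₂ s (hsub hs))
    (fun s hs => hy₁range s (hsub hs)) (fun s hs => hy₂range s (hsub hs))
    (hy₁0.trans hy₂0.symm) t ⟨ht₀, le_rfl⟩
  rw [sub_zero] at hgron
  calc |y₁ t - y₂ t|
      ≤ |alleeTransform (y₁ t) - alleeTransform (y₂ t)| :=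
        abs_sub_le_abs_alleeTransform_sub (hy₁range t ⟨ht₀, htT⟩) (hy₂range t ⟨ht₀, htT⟩)
    _ ≤ 4 * r / 27 * (S / θm ^ 2) * t * Real.exp (r * t) :=
        hgron.trans (gronwallBound_zero_le hr.le (by positivity))
    _ ≤ 4 * r / 27 * (S / θm ^ 2) * t *
          Real.exp (r * t * max ((θp - 1) ^ 2 / (3 * θm) + 1 / 3) 1) := by
        gcongr _ * Real.exp ?_
        exact le_mul_of_one_le_right (by positivity) (le_max_right _ _)
    _ = _ := by ring

/-- Stability of the logistic-Allee ODE with respect to the threshold function. -/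
theorem stmt_1 (T r θm θp y₀ : ℝ) (hT : 0 < T) (hr : 0 < r)
    (hθm : 0 < θm) (hθp : 1 < θp)
    (θ₁ θ₂ : ℝ → ℝ) (hθ₁c : ContinuousOn θ₁ (Icc 0 T)) (hθ₂c : ContinuousOn θ₂ (Icc 0 T))
    (hθ₁range : ∀ t ∈ Icc (0:ℝ) T, θ₁ t ∈ Icc θm θp)
    (hθ₂range : ∀ t ∈ Icc (0:ℝ) T, θ₂ t ∈ Icc θm θp)
    (y₁ y₂ : ℝ → ℝ)
    (hy₁ : ∀ t ∈ Icc (0:ℝ) T,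
      HasDerivAt y₁ (r * y₁ t * (1 - y₁ t) * (y₁ t / θ₁ t - 1)) t)
    (hy₂ : ∀ t ∈ Icc (0:ℝ) T,
      HasDerivAt y₂ (r * y₂ t * (1 - y₂ t) * (y₂ t / θ₂ t - 1)) t)
    (hy₁0 : y₁ 0 = y₀) (hy₂0 : y₂ 0 = y₀) (hy₀ : y₀ ∈ Ioo (0:ℝ) 1)
    (hy₁range : ∀ t ∈ Icc (0:ℝ) T, y₁ t ∈ Ioo (0:ℝ) 1)
    (hy₂range : ∀ t ∈ Icc (0:ℝ) T, y₂ t ∈ Ioo (0:ℝ) 1) :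
    ∀ t ∈ Icc (0:ℝ) T,
      |y₁ t - y₂ t| ≤
        (4 * r * t / (27 * θm ^ 2)) *
          Real.exp (r * t * max ((θp - 1) ^ 2 / (3 * θm) + 1 / 3) 1) *
          sSup ((fun s => |θ₁ s - θ₂ s|) '' Icc (0:ℝ) t) :=
  stmt_1_general T r θm θp y₀ hr hθm θ₁ θ₂ hθ₁c hθ₂c hθ₁range hθ₂range y₁ y₂ hy₁ hy₂ hy₁0 hy₂0
    hy₁range hy₂range
end

section
/- Stability of the non-autonomous logistic equation with respect to the growth rate: if x₁ and x₂ solve xᵢ' = rᵢ(t) xᵢ(1 - xᵢ/K) with the same initial value x₀ ∈ (0,K) and continuous positive growth rates r₁, r₂, then for all t ∈ [0,T], |x₁(t) - x₂(t)| ≤ K A t / (1 + A·min_{i=1,2} exp(-t·sup_{[0,t]}|rᵢ|))² · sup_{s∈[0,t]}|r₁(s) - r₂(s)|, where A = (K - x₀)/x₀. -/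
open Set

lemma exp_neg_lip {u v : ℝ} (hu : 0 ≤ u) (hv : 0 ≤ v) :
    |Real.exp (-u) - Real.exp (-v)| ≤ |u - v| := by
  wlog h : v ≤ u generalizing u v
  · rw [abs_sub_comm, abs_sub_comm u v]; exact this hv hu (le_of_not_ge h)
  have emul : Real.exp (-v) * Real.exp (-(u - v)) = Real.exp (-u) := by
    rw [← Real.exp_add]; ring_nf
  have h2 : 1 - (u - v) ≤ Real.exp (-(u - v)) := by
    have := Real.add_one_le_exp (-(u - v)); linarith
  have h3 : Real.exp (-v) ≤ 1 := Real.exp_le_one_iff.mpr (by linarith)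
  have h4 : Real.exp (-u) ≤ Real.exp (-v) := Real.exp_le_exp.mpr (by linarith)
  rw [abs_of_nonpos (by linarith), abs_of_nonneg (by linarith)]
  nlinarith [Real.exp_pos (-v), Real.exp_le_one_iff.mpr (by linarith : -(u - v) ≤ 0)]

/-- Stability of the non-autonomous logistic equation with respect to the growth rate. -/
theorem stmt_5 (T K x₀ : ℝ) (hT : 0 < T) (hK : 0 < K) (hx₀ : x₀ ∈ Ioo 0 K)
    (r₁ r₂ : ℝ → ℝ)
    (hr₁ : ContinuousOn r₁ (Icc 0 T)) (hr₂ : ContinuousOn r₂ (Icc 0 T))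
    (hr₁pos : ∀ t ∈ Icc (0:ℝ) T, 0 < r₁ t) (hr₂pos : ∀ t ∈ Icc (0:ℝ) T, 0 < r₂ t)
    (x₁ x₂ : ℝ → ℝ)
    (hx₁ : x₁ = fun t => K / (1 + (K - x₀) / x₀ * Real.exp (-∫ s in (0:ℝ)..t, r₁ s)))
    (hx₂ : x₂ = fun t => K / (1 + (K - x₀) / x₀ * Real.exp (-∫ s in (0:ℝ)..t, r₂ s))) :
    ∀ t ∈ Icc (0:ℝ) T,
      |x₁ t - x₂ t| ≤
        K * ((K - x₀) / x₀) * t /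
          (1 + (K - x₀) / x₀ *
            min (Real.exp (-t * sSup ((fun s => |r₁ s|) '' Icc (0:ℝ) t)))
                (Real.exp (-t * sSup ((fun s => |r₂ s|) '' Icc (0:ℝ) t)))) ^ 2 *
          sSup ((fun s => |r₁ s - r₂ s|) '' Icc (0:ℝ) t) := by
  obtain ⟨hx0pos, hx0K⟩ := hx₀
  set A := (K - x₀) / x₀ with hAdef
  have hA : 0 < A := div_pos (by linarith) hx0pos
  intro t ht
  obtain ⟨ht0, htT⟩ := ht
  subst hx₁ hx₂
  simp only
  have hsub : Icc (0:ℝ) t ⊆ Icc 0 T := Icc_subset_Icc le_rfl htT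
  have hc1 : ContinuousOn r₁ (Icc 0 t) := hr₁.mono hsub
  have hc2 : ContinuousOn r₂ (Icc 0 t) := hr₂.mono hsub
  have hi1 : IntervalIntegrable r₁ MeasureTheory.volume 0 t :=
    hc1.intervalIntegrable_of_Icc ht0
  have hi2 : IntervalIntegrable r₂ MeasureTheory.volume 0 t :=
    hc2.intervalIntegrable_of_Icc ht0
  set I₁ := ∫ s in (0:ℝ)..t, r₁ s with hI₁def
  set I₂ := ∫ s in (0:ℝ)..t, r₂ s with hI₂def
  have hI₁0 : 0 ≤ I₁ :=
    intervalIntegral.integral_nonneg ht0 (fun s hs => (hr₁pos s (hsub hs)).le)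
  have hI₂0 : 0 ≤ I₂ :=
    intervalIntegral.integral_nonneg ht0 (fun s hs => (hr₂pos s (hsub hs)).le)
  have hne : (Icc (0:ℝ) t).Nonempty := ⟨0, left_mem_Icc.mpr ht0⟩
  set M₁ := sSup ((fun s => |r₁ s|) '' Icc (0:ℝ) t) with hM₁def
  set M₂ := sSup ((fun s => |r₂ s|) '' Icc (0:ℝ) t) with hM₂def
  set S := sSup ((fun s => |r₁ s - r₂ s|) '' Icc (0:ℝ) t) with hSdef
  have hbdd₁ : BddAbove ((fun s => |r₁ s|) '' Icc (0:ℝ) t) :=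
    (isCompact_Icc.image_of_continuousOn (continuous_abs.comp_continuousOn hc1)).bddAbove
  have hbdd₂ : BddAbove ((fun s => |r₂ s|) '' Icc (0:ℝ) t) :=
    (isCompact_Icc.image_of_continuousOn (continuous_abs.comp_continuousOn hc2)).bddAbove
  have hbddS : BddAbove ((fun s => |r₁ s - r₂ s|) '' Icc (0:ℝ) t) :=
    (isCompact_Icc.image_of_continuousOn
      (continuous_abs.comp_continuousOn (hc1.sub hc2))).bddAbove
  have hM₁le : ∀ s ∈ Icc (0:ℝ) t, |r₁ s| ≤ M₁ :=
    fun s hs => le_csSup hbdd₁ (mem_image_of_mem _ hs)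
  have hM₂le : ∀ s ∈ Icc (0:ℝ) t, |r₂ s| ≤ M₂ :=
    fun s hs => le_csSup hbdd₂ (mem_image_of_mem _ hs)
  have hSle : ∀ s ∈ Icc (0:ℝ) t, |r₁ s - r₂ s| ≤ S :=
    fun s hs => le_csSup hbddS (mem_image_of_mem _ hs)
  have hS0 : 0 ≤ S := le_trans (abs_nonneg _) (hSle 0 (left_mem_Icc.mpr ht0))
  have hIocsub : uIoc (0:ℝ) t ⊆ Icc 0 t := by
    rw [uIoc_of_le ht0]; exact Ioc_subset_Icc_self
  have hI₁M : I₁ ≤ M₁ * t := by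
    have := intervalIntegral.norm_integral_le_of_norm_le_const
      (C := M₁) (f := r₁) (a := (0:ℝ)) (b := t)
      (fun s hs => hM₁le s (hIocsub hs))
    rw [Real.norm_eq_abs, abs_of_nonneg (by linarith : (0:ℝ) ≤ t - 0)] at this
    calc I₁ ≤ |I₁| := le_abs_self _
      _ ≤ M₁ * (t - 0) := this
      _ = M₁ * t := by ring
  have hI₂M : I₂ ≤ M₂ * t := by
    have := intervalIntegral.norm_integral_le_of_norm_le_const
      (C := M₂) (f := r₂) (a := (0:ℝ)) (b := t)
      (fun s hs => hM₂le s (hIocsub hs))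
    rw [Real.norm_eq_abs, abs_of_nonneg (by linarith : (0:ℝ) ≤ t - 0)] at this
    calc I₂ ≤ |I₂| := le_abs_self _
      _ ≤ M₂ * (t - 0) := this
      _ = M₂ * t := by ring
  have hIdiff : |I₁ - I₂| ≤ S * t := by
    have heq : I₁ - I₂ = ∫ s in (0:ℝ)..t, (r₁ s - r₂ s) :=
      (intervalIntegral.integral_sub hi1 hi2).symm
    have := intervalIntegral.norm_integral_le_of_norm_le_const
      (C := S) (f := fun s => r₁ s - r₂ s) (a := (0:ℝ)) (b := t)
      (fun s hs => hSle s (hIocsub hs))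
    rw [Real.norm_eq_abs, abs_of_nonneg (by linarith : (0:ℝ) ≤ t - 0)] at this
    rw [heq]
    calc |∫ s in (0:ℝ)..t, (r₁ s - r₂ s)| ≤ S * (t - 0) := this
      _ = S * t := by ring
  set a := Real.exp (-I₁) with hadef
  set b := Real.exp (-I₂) with hbdef
  set m := min (Real.exp (-t * M₁)) (Real.exp (-t * M₂)) with hmdef
  have ham : m ≤ a := le_trans (min_le_left _ _)
    (Real.exp_le_exp.mpr (by linarith))
  have hbm : m ≤ b := le_trans (min_le_right _ _)
    (Real.exp_le_exp.mpr (by linarith))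
  have hm0 : 0 < m := lt_min (Real.exp_pos _) (Real.exp_pos _)
  have hda : 0 < 1 + A * a := by nlinarith
  have hdb : 0 < 1 + A * b := by nlinarith
  have hdm : 0 < 1 + A * m := by nlinarith
  have habs : |b - a| ≤ S * t := by
    rw [abs_sub_comm]
    exact le_trans (exp_neg_lip hI₁0 hI₂0) hIdiff
  have heq : K / (1 + A * a) - K / (1 + A * b) =
      K * A * (b - a) / ((1 + A * a) * (1 + A * b)) := by
    field_simp
    ring
  rw [heq, abs_div, abs_mul, abs_mul, abs_of_pos hK, abs_of_pos hA,
    abs_of_pos (mul_pos hda hdb)]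
  have htarget : K * A * t / (1 + A * m) ^ 2 * S =
      K * A * (S * t) / ((1 + A * m) ^ 2) := by ring
  rw [htarget]
  apply div_le_div₀ (by positivity)
  · exact mul_le_mul_of_nonneg_left habs (by positivity)
  · positivity
  · have h1 : 1 + A * m ≤ 1 + A * a := by
      have := mul_le_mul_of_nonneg_left ham hA.le; linarith
    have h2 : 1 + A * m ≤ 1 + A * b := by
      have := mul_le_mul_of_nonneg_left hbm hA.le; linarith
    calc (1 + A * m) ^ 2 = (1 + A * m) * (1 + A * m) := sq (1 + A * m)
      _ ≤ (1 + A * a) * (1 + A * b) := mul_le_mul h1 h2 hdm.le (by linarith)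
end
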